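/- arXiv:0812.0853 — 5 statements merged into one kernel-verified Lean document; each statement's English description precedes it below -/
import Mathlib

section
/- Let K be a field, A a commutative K-algebra, and let π₁ : K[X_1,…,X_{N₁}] →ₐ A and π₂ : K[Y_1,…,Y_{N₂}] →ₐ A be two surjective K-algebra homomorphisms. Let φ : A →ₐ A be a K-algebra endomorphism of A. Then limsup_{n→∞} (1/n)·log deg(φⁿ;π₁) = limsup_{n→∞} (1/n)·log deg(φⁿ;π₂); that is, the algebraic entropy of φ relative to π₁ equals the algebraic entropy of φ relative to π₂. -/
/-!
Each presentation writes the generators of the other as polynomials, of degrees bounded by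
constants `C` and `C'`. Substituting these into a lift of `ψ` along `π₂` of degree
`deg(ψ;π₂)` gives a lift along `π₁` of degree at most `C * C' * deg(ψ;π₂)`, for every
endomorphism `ψ`. Applied to `ψ = φⁿ`, the constant contributes `log (C * C') / n → 0`
to the entropy.
-/

/-- The degree of a `K`-algebra endomorphism `φ` of `A` relative to a presentation
`π : K[X_1,…,X_N] →ₐ A`: the least `d` such that there is a tuple of polynomials
`q_j` of total degree at most `d` with `π (q j) = φ (π (X j))` for all `j`. -/
noncomputable def relDeg {K A : Type*} [Field K] [CommRing A] [Algebra K A] {N : ℕ}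
    (φ : A →ₐ[K] A) (π : MvPolynomial (Fin N) K →ₐ[K] A) : ℕ :=
  sInf {d : ℕ | ∃ q : Fin N → MvPolynomial (Fin N) K,
    (∀ j, π (q j) = φ (π (MvPolynomial.X j))) ∧ ∀ j, (q j).totalDegree ≤ d}

/-- The algebraic entropy of `φ` relative to the presentation `π`. -/
noncomputable def relEntropy {K A : Type*} [Field K] [CommRing A] [Algebra K A] {N : ℕ}
    (φ : A →ₐ[K] A) (π : MvPolynomial (Fin N) K →ₐ[K] A) : EReal :=
  Filter.atTop.limsup fun n : ℕ => ((Real.log (relDeg (φ ^ n) π) / n : ℝ) : EReal)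

open MvPolynomial Filter Topology

namespace MvPolynomial

lemma totalDegree_aeval_le {R σ τ : Type*} [CommSemiring R] {q : σ → MvPolynomial τ R} {d : ℕ}
    (hq : ∀ i, (q i).totalDegree ≤ d) (p : MvPolynomial σ R) :
    (aeval q p).totalDegree ≤ p.totalDegree * d := by
  classical
  conv_lhs => rw [p.as_sum, map_sum]
  refine (totalDegree_finsetSum _ _).trans (Finset.sup_le fun m hm => ?_)
  rw [aeval_monomial, algebraMap_eq, ← smul_eq_C_mul]
  refine (totalDegree_smul_le _ _).trans ((totalDegree_finsetProd _ _).trans ?_)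
  calc ∑ i ∈ m.support, (q i ^ m i).totalDegree
      ≤ ∑ i ∈ m.support, m i * d :=
        Finset.sum_le_sum fun i _ => (totalDegree_pow _ _).trans (Nat.mul_le_mul_left _ (hq i))
    _ = (∑ i ∈ m.support, m i) * d := (Finset.sum_mul ..).symm
    _ ≤ p.totalDegree * d := Nat.mul_le_mul_right _ (le_totalDegree hm)

lemma apply_aeval_of_lifts {R σ τ A : Type*} [CommSemiring R] [CommSemiring A] [Algebra R A]
    {π : MvPolynomial τ R →ₐ[R] A} {f : MvPolynomial σ R →ₐ[R] A} {q : σ → MvPolynomial τ R}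
    (hq : ∀ i, π (q i) = f (X i)) (p : MvPolynomial σ R) : π (aeval q p) = f p :=
  AlgHom.congr_fun (algHom_ext fun i => by simpa using hq i : π.comp (aeval q) = f) p

end MvPolynomial

lemma Real.log_natCast_le_log_add_log {a b c : ℕ} (h : a ≤ b * c) :
    Real.log a ≤ Real.log b + Real.log c := by
  rcases Nat.eq_zero_or_pos a with rfl | ha
  · simpa using add_nonneg (Real.log_natCast_nonneg b) (Real.log_natCast_nonneg c)
  have hb : b ≠ 0 := by rintro rfl; omega
  have hc : c ≠ 0 := by rintro rfl; omega
  rw [← Real.log_mul (by exact_mod_cast hb) (by exact_mod_cast hc)]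
  exact Real.log_le_log (by exact_mod_cast ha) (by exact_mod_cast h)

lemma EReal.limsup_coe_le_of_le_add_of_tendsto_zero {ι : Type*} {l : Filter ι} [l.NeBot]
    {u v w : ι → ℝ} (h : ∀ i, u i ≤ v i + w i) (hv : Tendsto v l (𝓝 0)) :
    l.limsup (fun i => (u i : EReal)) ≤ l.limsup (fun i => (w i : EReal)) := by
  have hv0 : l.limsup (fun i => (v i : EReal)) = 0 :=
    (continuous_coe_real_ereal.tendsto 0 |>.comp hv).limsup_eq
  calc l.limsup (fun i => (u i : EReal))
      ≤ l.limsup ((fun i => (v i : EReal)) + fun i => (w i : EReal)) :=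
        limsup_le_limsup (.of_forall fun i => EReal.coe_le_coe_iff.2 (h i))
    _ ≤ l.limsup (fun i => (v i : EReal)) + l.limsup (fun i => (w i : EReal)) :=
        EReal.limsup_add_le (.inl (by simp [hv0])) (.inl (by simp [hv0]))
    _ = l.limsup (fun i => (w i : EReal)) := by rw [hv0, zero_add]

lemma limsup_log_div_le_of_le_mul {f g : ℕ → ℕ} {M : ℕ} (h : ∀ n, f n ≤ M * g n) :
    atTop.limsup (fun n : ℕ => ((Real.log (f n) / n : ℝ) : EReal)) ≤
      atTop.limsup (fun n : ℕ => ((Real.log (g n) / n : ℝ) : EReal)) :=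
  EReal.limsup_coe_le_of_le_add_of_tendsto_zero
    (fun n => by
      rw [← add_div]
      exact div_le_div_of_nonneg_right (Real.log_natCast_le_log_add_log (h n)) n.cast_nonneg)
    (tendsto_const_div_atTop_nhds_zero_nat _)

section relDeg

variable {K A : Type*} [Field K] [CommRing A] [Algebra K A] {N N₁ N₂ : ℕ}

lemma relDeg_le {φ : A →ₐ[K] A} {π : MvPolynomial (Fin N) K →ₐ[K] A}
    {q : Fin N → MvPolynomial (Fin N) K} {d : ℕ} (hq : ∀ j, π (q j) = φ (π (X j)))
    (hd : ∀ j, (q j).totalDegree ≤ d) : relDeg φ π ≤ d :=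
  Nat.sInf_le ⟨q, hq, hd⟩

lemma exists_lifts_totalDegree_le_relDeg {π : MvPolynomial (Fin N) K →ₐ[K] A}
    (hπ : Function.Surjective π) (φ : A →ₐ[K] A) :
    ∃ q : Fin N → MvPolynomial (Fin N) K,
      (∀ j, π (q j) = φ (π (X j))) ∧ ∀ j, (q j).totalDegree ≤ relDeg φ π := by
  choose q hq using fun j => hπ (φ (π (X j)))
  obtain ⟨d, hd⟩ := Finite.exists_le fun j => (q j).totalDegree
  exact Nat.sInf_mem (s := {d | ∃ q : Fin N → MvPolynomial (Fin N) K,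
    (∀ j, π (q j) = φ (π (X j))) ∧ ∀ j, (q j).totalDegree ≤ d}) ⟨d, q, hq, hd⟩

lemma exists_relDeg_le_mul_relDeg {π₁ : MvPolynomial (Fin N₁) K →ₐ[K] A}
    {π₂ : MvPolynomial (Fin N₂) K →ₐ[K] A} (hπ₁ : Function.Surjective π₁)
    (hπ₂ : Function.Surjective π₂) :
    ∃ M : ℕ, ∀ ψ : A →ₐ[K] A, relDeg ψ π₁ ≤ M * relDeg ψ π₂ := by
  choose P hP using fun i => hπ₂ (π₁ (X i))
  choose Q hQ using fun j => hπ₁ (π₂ (X j))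
  obtain ⟨C, hC⟩ := Finite.exists_le fun i => (P i).totalDegree
  obtain ⟨C', hC'⟩ := Finite.exists_le fun j => (Q j).totalDegree
  refine ⟨C * C', fun ψ => ?_⟩
  obtain ⟨p, hp, hpd⟩ := exists_lifts_totalDegree_le_relDeg hπ₂ ψ
  refine relDeg_le (q := fun i => aeval Q (aeval p (P i))) (fun i => ?_) (fun i => ?_)
  · rw [apply_aeval_of_lifts hQ, apply_aeval_of_lifts (f := ψ.comp π₂) hp, AlgHom.comp_apply,
      hP]
  · calc (aeval Q (aeval p (P i))).totalDegree
        ≤ (P i).totalDegree * relDeg ψ π₂ * C' :=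
          (totalDegree_aeval_le hC' _).trans
            (Nat.mul_le_mul_right _ (totalDegree_aeval_le hpd _))
      _ ≤ C * relDeg ψ π₂ * C' := Nat.mul_le_mul_right _ (Nat.mul_le_mul_right _ (hC i))
      _ = C * C' * relDeg ψ π₂ := by ring

lemma relEntropy_le_relEntropy {π₁ : MvPolynomial (Fin N₁) K →ₐ[K] A}
    {π₂ : MvPolynomial (Fin N₂) K →ₐ[K] A} (hπ₁ : Function.Surjective π₁)
    (hπ₂ : Function.Surjective π₂) (φ : A →ₐ[K] A) :
    relEntropy φ π₁ ≤ relEntropy φ π₂ :=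
  let ⟨_, hM⟩ := exists_relDeg_le_mul_relDeg hπ₁ hπ₂
  limsup_log_div_le_of_le_mul fun n => hM (φ ^ n)

end relDeg

theorem relEntropy_independent_of_presentation {K A : Type*} [Field K] [CommRing A]
    [Algebra K A] {N₁ N₂ : ℕ}
    (π₁ : MvPolynomial (Fin N₁) K →ₐ[K] A) (hπ₁ : Function.Surjective π₁)
    (π₂ : MvPolynomial (Fin N₂) K →ₐ[K] A) (hπ₂ : Function.Surjective π₂)
    (φ : A →ₐ[K] A) :
    relEntropy φ π₁ = relEntropy φ π₂ :=
  (relEntropy_le_relEntropy hπ₁ hπ₂ φ).antisymm (relEntropy_le_relEntropy hπ₂ hπ₁ φ)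
end

section
/- Let K be a field, A a commutative K-algebra, and let π₁ : K[X_1,…,X_{N₁}] →ₐ A and π₂ : K[Y_1,…,Y_{N₂}] →ₐ A be two surjective K-algebra homomorphisms. Let φ : A →ₐ A be a K-algebra endomorphism. Then there exist positive integers D₁ and D₂ such that for every n ≥ 1: deg(φⁿ;π₁) ≤ D₁·D₂·deg(φⁿ;π₂). -/
open MvPolynomial

lemma totalDegree_aeval_le' {K : Type*} [CommSemiring K] {σ τ : Type*}
    (f : σ → MvPolynomial τ K) {d : ℕ} (hf : ∀ i, (f i).totalDegree ≤ d)
    (p : MvPolynomial σ K) :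
    (MvPolynomial.aeval f p).totalDegree ≤ p.totalDegree * d := by
  classical
  rw [aeval_def, eval₂_eq]
  refine (totalDegree_finset_sum _ _).trans (Finset.sup_le fun m hm => ?_)
  calc ((algebraMap K (MvPolynomial τ K)) (p.coeff m) *
        ∏ i ∈ m.support, f i ^ m i).totalDegree
      ≤ ((algebraMap K (MvPolynomial τ K)) (p.coeff m)).totalDegree +
        (∏ i ∈ m.support, f i ^ m i).totalDegree := totalDegree_mul _ _
    _ = (∏ i ∈ m.support, f i ^ m i).totalDegree := by
        simp [MvPolynomial.algebraMap_eq]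
    _ ≤ ∑ i ∈ m.support, (f i ^ m i).totalDegree := totalDegree_finset_prod _ _
    _ ≤ ∑ i ∈ m.support, m i * d := by
        refine Finset.sum_le_sum fun i _ => ?_
        exact (totalDegree_pow _ _).trans (Nat.mul_le_mul_left _ (hf i))
    _ = (∑ i ∈ m.support, m i) * d := by rw [Finset.sum_mul]
    _ ≤ p.totalDegree * d := Nat.mul_le_mul_right _ (le_totalDegree hm)

theorem relDeg_comparable {K A : Type*} [Field K] [CommRing A] [Algebra K A] {N₁ N₂ : ℕ}
    (π₁ : MvPolynomial (Fin N₁) K →ₐ[K] A) (hπ₁ : Function.Surjective π₁)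
    (π₂ : MvPolynomial (Fin N₂) K →ₐ[K] A) (hπ₂ : Function.Surjective π₂)
    (φ : A →ₐ[K] A) :
    ∃ D₁ D₂ : ℕ, 0 < D₁ ∧ 0 < D₂ ∧
      ∀ n : ℕ, 1 ≤ n → relDeg (φ ^ n) π₁ ≤ D₁ * D₂ * relDeg (φ ^ n) π₂ := by
  classical
  choose u hu using fun i : Fin N₂ => hπ₁ (π₂ (X i))
  choose v hv using fun j : Fin N₁ => hπ₂ (π₁ (X j))
  set D₁ : ℕ := max 1 (Finset.univ.sup fun i => (u i).totalDegree) with hD₁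
  set D₂ : ℕ := max 1 (Finset.univ.sup fun j => (v j).totalDegree) with hD₂
  have hD₁pos : 0 < D₁ := lt_of_lt_of_le one_pos (le_max_left _ _)
  have hD₂pos : 0 < D₂ := lt_of_lt_of_le one_pos (le_max_left _ _)
  have hu_deg : ∀ i, (u i).totalDegree ≤ D₁ := fun i => by
    rw [hD₁]; exact (Finset.le_sup (f := fun i => (u i).totalDegree) (Finset.mem_univ i)).trans (le_max_right _ _)
  have hv_deg : ∀ j, (v j).totalDegree ≤ D₂ := fun j => by
    rw [hD₂]; exact (Finset.le_sup (f := fun j => (v j).totalDegree) (Finset.mem_univ j)).trans (le_max_right _ _)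
  have key : ∀ p : MvPolynomial (Fin N₂) K, π₁ (aeval u p) = π₂ p := by
    intro p
    have : π₁.comp (aeval u) = π₂ := by
      apply algHom_ext
      intro i
      simp [hu i]
    calc π₁ (aeval u p) = (π₁.comp (aeval u)) p := rfl
      _ = π₂ p := by rw [this]
  refine ⟨D₁, D₂, hD₁pos, hD₂pos, fun n _ => ?_⟩
  set ψ := φ ^ n with hψ
  -- the defining set for relDeg ψ π₂ is nonempty
  choose q₀ hq₀ using fun i : Fin N₂ => hπ₂ (ψ (π₂ (X i)))
  have hne : (relDeg ψ π₂) ∈ {d : ℕ | ∃ q : Fin N₂ → MvPolynomial (Fin N₂) K,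
      (∀ j, π₂ (q j) = ψ (π₂ (X j))) ∧ ∀ j, (q j).totalDegree ≤ d} := by
    apply Nat.sInf_mem
    exact ⟨Finset.univ.sup fun i => (q₀ i).totalDegree,
      q₀, hq₀, fun j => Finset.le_sup (f := fun i => (q₀ i).totalDegree) (Finset.mem_univ j)⟩
  obtain ⟨q, hq1, hq2⟩ := hne
  set d := relDeg ψ π₂ with hd
  -- build witnesses for π₁
  set p : Fin N₁ → MvPolynomial (Fin N₁) K :=
    fun j => aeval (fun i => aeval u (q i)) (v j) with hp
  have hval : ∀ j, π₁ (p j) = ψ (π₁ (X j)) := by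
    intro j
    have h1 : π₁ (p j) = aeval (fun i => π₁ (aeval u (q i))) (v j) := by
      rw [hp]; exact comp_aeval_apply (f := fun i => aeval u (q i)) π₁ (v j)
    rw [h1]
    have h2 : ∀ i, π₁ (aeval u (q i)) = ψ (π₂ (X i)) := fun i => by
      rw [key (q i), hq1 i]
    simp_rw [h2]
    have h3 : (AlgHom.comp ψ π₂ : MvPolynomial (Fin N₂) K →ₐ[K] A) =
        aeval (fun i => ψ (π₂ (X i))) := by
      apply algHom_ext; intro i; simp
    calc (aeval fun i => ψ (π₂ (X i))) (v j)
        = (AlgHom.comp ψ π₂) (v j) := by rw [h3]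
      _ = ψ (π₁ (X j)) := by simp [hv j]
  have hdeg : ∀ j, (p j).totalDegree ≤ D₁ * D₂ * d := by
    intro j
    have hin : ∀ i, ((aeval u) (q i)).totalDegree ≤ d * D₁ := fun i =>
      (totalDegree_aeval_le' u hu_deg (q i)).trans (Nat.mul_le_mul_right _ (hq2 i))
    calc (p j).totalDegree ≤ (v j).totalDegree * (d * D₁) :=
          totalDegree_aeval_le' _ hin (v j)
      _ ≤ D₂ * (d * D₁) := Nat.mul_le_mul_right _ (hv_deg j)
      _ = D₁ * D₂ * d := by ring
  exact Nat.sInf_le ⟨p, hval, hdeg⟩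
end

section
/- Let K be a field equipped with an absolute value |·| : K → ℝ. Let A be a commutative K-algebra, π : K[X_1,…,X_N] →ₐ A a surjective K-algebra homomorphism, φ : A →ₐ A a K-algebra endomorphism, and P₀ : A →ₐ K a K-point of A (a K-algebra homomorphism to K). Set y := π(X_1). Suppose there exists ε > 0 such that |P₀(φⁿ(y))| > ε for all n ≥ 0, and let l := limsup_{n→∞} (1/n)·log(log |P₀(φⁿ(y))|). Then l ≤ limsup_{n→∞} (1/n)·log deg(φⁿ;π), i.e. l is at most the algebraic entropy of φ relative to π. -/
/-!
Evaluating at the `K`-point `P₀` turns the orbit of the generators under `φ` into an orbit of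
points `x n ∈ K^N` with `x (n + m) = q (x n)`, where `q` is a tuple of polynomials of degree
`d = deg(φ^m; π)`. For the naive height `H x = max 1 (∑ |x_j|)` this gives
`log H (x (n + m)) ≤ c + d · log H (x n)`, so `log H (x n)` grows at most like
`n · d ^ (n / m)`. Since `|y_n| > ε`, also `|log |y_n||` is bounded by `log H (x n) + |log ε|`,
so `log log |y_n|` grows at most like `(n / m) · log d`. Hence the left-hand side is bounded by
`log deg(φ^m; π) / m` for every `m ≥ 1`, and so by the limit inferior of the entropy sequence.
-/

open Filter Topology MvPolynomial

theorem Real.log_le_log_of_abs_le {x y : ℝ} (h : |x| ≤ y) (hy : 1 ≤ y) :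
    Real.log x ≤ Real.log y := by
  rw [← Real.log_abs]
  rcases (abs_nonneg x).eq_or_lt with hx | hx
  · rw [← hx, Real.log_zero]
    exact Real.log_nonneg hy
  · exact Real.log_le_log hx h

theorem tendsto_log_natCast_add_one_div :
    Tendsto (fun n : ℕ => Real.log (n + 1) / n) atTop (𝓝 0) := by
  have := (Real.tendsto_pow_log_div_mul_add_atTop 1 (-1) 1 one_ne_zero).comp
    (tendsto_atTop_add_const_right _ 1 tendsto_natCast_atTop_atTop)
  simpa [Function.comp_def] using this

section LinearRecurrence

variable {u : ℕ → ℝ} {m : ℕ} {c D : ℝ}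

theorem le_mul_pow_of_le_add_mul (hc : 0 ≤ c) (hD : 1 ≤ D)
    (hrec : ∀ n, u (n + m) ≤ c + D * u n) (k r : ℕ) :
    u (m * k + r) ≤ (u r + c * k) * D ^ k := by
  induction k with
  | zero => simp
  | succ k ih =>
    have hDk : 1 ≤ D ^ (k + 1) := one_le_pow₀ hD
    calc u (m * (k + 1) + r) = u (m * k + r + m) := by ring_nf
      _ ≤ c + D * ((u r + c * k) * D ^ k) := by grw [hrec, ih]
      _ = c + (u r + c * k) * D ^ (k + 1) := by ring
      _ ≤ c * D ^ (k + 1) + (u r + c * k) * D ^ (k + 1) := by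
        grw [← le_mul_of_one_le_right hc hDk]
      _ = (u r + c * ↑(k + 1)) * D ^ (k + 1) := by push_cast; ring

theorem exists_le_mul_pow_of_le_add_mul (hm : 0 < m) (hc : 0 ≤ c) (hD : 1 ≤ D)
    (hrec : ∀ n, u (n + m) ≤ c + D * u n) :
    ∃ A, 1 ≤ A ∧ ∀ n : ℕ, u n ≤ A * (n + 1) * D ^ (n / m) := by
  set A := 1 + c + ∑ r ∈ Finset.range m, |u r|
  have hsum : 0 ≤ ∑ r ∈ Finset.range m, |u r| := Finset.sum_nonneg fun r _ => abs_nonneg _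
  have hu : ∀ r < m, u r ≤ A := fun r hr =>
    calc u r ≤ |u r| := le_abs_self _
      _ ≤ ∑ r ∈ Finset.range m, |u r| :=
        Finset.single_le_sum (fun r _ => abs_nonneg (u r)) (Finset.mem_range.2 hr)
      _ ≤ A := by linarith
  refine ⟨A, by linarith, fun n => ?_⟩
  have hk : ((n / m : ℕ) : ℝ) ≤ n := Nat.cast_le.2 (Nat.div_le_self n m)
  have hcA : c * (n / m : ℕ) ≤ A * n :=
    mul_le_mul (by linarith) hk (Nat.cast_nonneg _) (by linarith)
  calc u n = u (m * (n / m) + n % m) := by rw [Nat.div_add_mod]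
    _ ≤ (u (n % m) + c * (n / m : ℕ)) * D ^ (n / m) := le_mul_pow_of_le_add_mul hc hD hrec _ _
    _ ≤ (A + A * n) * D ^ (n / m) := by
      gcongr
      linarith [hu _ (Nat.mod_lt n hm)]
    _ = A * (n + 1) * D ^ (n / m) := by ring

end LinearRecurrence

theorem limsup_log_div_le_of_abs_le_mul_pow {f : ℕ → ℝ} {A D : ℝ} {m : ℕ} (hA : 1 ≤ A)
    (hD : 1 ≤ D) (hf : ∀ n : ℕ, |f n| ≤ A * (n + 1) * D ^ (n / m)) :
    limsup (fun n : ℕ => ((Real.log (f n) / n : ℝ) : EReal)) atTop ≤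
      ((Real.log D / m : ℝ) : EReal) := by
  have hbound : ∀ n : ℕ,
      Real.log (f n) ≤ Real.log A + Real.log (n + 1) + n * (Real.log D / m) := by
    intro n
    have hn : (1 : ℝ) ≤ n + 1 := by linarith [Nat.cast_nonneg (α := ℝ) n]
    have hdiv : ((n / m : ℕ) : ℝ) * Real.log D ≤ n / m * Real.log D :=
      mul_le_mul_of_nonneg_right Nat.cast_div_le (Real.log_nonneg hD)
    calc Real.log (f n) ≤ Real.log (A * (n + 1) * D ^ (n / m)) :=
          Real.log_le_log_of_abs_le (hf n)
            (one_le_mul_of_one_le_of_one_le (one_le_mul_of_one_le_of_one_le hA hn)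
              (one_le_pow₀ hD))
      _ = Real.log A + Real.log (n + 1) + (n / m : ℕ) * Real.log D := by
          rw [Real.log_mul (by positivity) (by positivity), Real.log_mul (by positivity)
            (by positivity), Real.log_pow]
      _ ≤ Real.log A + Real.log (n + 1) + n * (Real.log D / m) := by
          have : (n : ℝ) * (Real.log D / m) = n / m * Real.log D := by ring
          linarith
  have hlim : Tendsto (fun n : ℕ => Real.log A / n + Real.log (n + 1) / n + Real.log D / m)
      atTop (𝓝 (Real.log D / m)) := by
    simpa using ((tendsto_const_div_atTop_nhds_zero_nat _).add
      tendsto_log_natCast_add_one_div).add_const (Real.log D / m)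
  calc limsup (fun n : ℕ => ((Real.log (f n) / n : ℝ) : EReal)) atTop
      ≤ limsup (fun n : ℕ =>
          ((Real.log A / n + Real.log (n + 1) / n + Real.log D / m : ℝ) : EReal)) atTop := by
        refine limsup_le_limsup ?_
        filter_upwards [eventually_gt_atTop 0] with n hn
        have hn : (0 : ℝ) < n := Nat.cast_pos.2 hn
        rw [EReal.coe_le_coe_iff, div_le_iff₀ hn]
        calc Real.log (f n) ≤ Real.log A + Real.log (n + 1) + n * (Real.log D / m) := hbound n
          _ = _ := by field_simp
    _ = ((Real.log D / m : ℝ) : EReal) := (EReal.tendsto_coe.2 hlim).limsup_eq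

theorem AbsoluteValue.apply_eval_le {R σ : Type*} [CommSemiring R] [Nontrivial R]
    (v : AbsoluteValue R ℝ) {x : σ → R} {B : ℝ} (hB : 1 ≤ B) (hx : ∀ i, v (x i) ≤ B)
    (p : MvPolynomial σ R) :
    v (eval x p) ≤ (∑ s ∈ p.support, v (p.coeff s)) * B ^ p.totalDegree := by
  rw [eval_eq, Finset.sum_mul]
  refine (v.sum_le _ _).trans (Finset.sum_le_sum fun s hs => ?_)
  rw [v.map_mul]
  refine mul_le_mul_of_nonneg_left ?_ (v.nonneg _)
  calc v (∏ i ∈ s.support, x i ^ s i)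
      = ∏ i ∈ s.support, v (x i) ^ s i := by simp only [map_prod, v.map_pow]
    _ ≤ ∏ i ∈ s.support, B ^ s i :=
      Finset.prod_le_prod (fun i _ => by positivity) fun i _ => by gcongr; exact hx i
    _ = B ^ s.sum fun _ e => e := Finset.prod_pow_eq_pow_sum _ _ _
    _ ≤ B ^ p.totalDegree := pow_le_pow_right₀ hB (le_totalDegree hs)

section NaiveHeight

variable {R ι κ : Type*} [CommSemiring R] [Fintype ι] [Fintype κ] (v : AbsoluteValue R ℝ)

noncomputable def naiveHeight (x : ι → R) : ℝ :=
  max 1 (∑ i, v (x i))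

variable {v}

theorem one_le_naiveHeight (x : ι → R) : 1 ≤ naiveHeight v x :=
  le_max_left _ _

theorem apply_le_naiveHeight (x : ι → R) (i : ι) : v (x i) ≤ naiveHeight v x :=
  (Finset.single_le_sum (fun j _ => v.nonneg (x j)) (Finset.mem_univ i)).trans (le_max_right _ _)

theorem naiveHeight_eval_le [Nontrivial R] (x : ι → R) (q : κ → MvPolynomial ι R) {D : ℕ}
    (hq : ∀ j, (q j).totalDegree ≤ D) :
    naiveHeight v (fun j => eval x (q j)) ≤
      max 1 (∑ j, ∑ s ∈ (q j).support, v ((q j).coeff s)) * naiveHeight v x ^ D := by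
  have hH := one_le_naiveHeight (v := v) x
  have hHD : 1 ≤ naiveHeight v x ^ D := one_le_pow₀ hH
  refine max_le (one_le_mul_of_one_le_of_one_le (le_max_left _ _) hHD) ?_
  calc ∑ j, v (eval x (q j))
      ≤ ∑ j, (∑ s ∈ (q j).support, v ((q j).coeff s)) * naiveHeight v x ^ D := by
        refine Finset.sum_le_sum fun j _ => (v.apply_eval_le hH (apply_le_naiveHeight x) _).trans ?_
        gcongr
        exact hq j
    _ = (∑ j, ∑ s ∈ (q j).support, v ((q j).coeff s)) * naiveHeight v x ^ D :=
        (Finset.sum_mul _ _ _).symm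
    _ ≤ _ := by gcongr; exact le_max_right _ _

end NaiveHeight

theorem limsup_log_log_div_le_of_orbit {R ι : Type*} [CommSemiring R] [Nontrivial R]
    [Fintype ι] (v : AbsoluteValue R ℝ) {x : ℕ → ι → R} {m d : ℕ} (hm : 0 < m)
    (q : ι → MvPolynomial ι R) (hq : ∀ j, (q j).totalDegree ≤ d)
    (horbit : ∀ n, x (n + m) = fun j => eval (x n) (q j))
    {ε : ℝ} (hε : 0 < ε) (i : ι) (hbig : ∀ n, ε < v (x n i)) :
    limsup (fun n : ℕ => ((Real.log (Real.log (v (x n i))) / n : ℝ) : EReal)) atTop ≤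
      ((Real.log d / m : ℝ) : EReal) := by
  set D := max d 1
  have hD : (1 : ℝ) ≤ D := by exact_mod_cast le_max_right d 1
  set C := max 1 (∑ j, ∑ s ∈ (q j).support, v ((q j).coeff s))
  have hC : 1 ≤ C := le_max_left _ _
  set u : ℕ → ℝ := fun n => Real.log (naiveHeight v (x n)) + |Real.log ε|
  have hrec : ∀ n, u (n + m) ≤ (Real.log C + |Real.log ε|) + D * u n := by
    intro n
    have hH : 0 < naiveHeight v (x n) := zero_lt_one.trans_le (one_le_naiveHeight _)
    have hstep : Real.log (naiveHeight v (x (n + m))) ≤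
        Real.log C + D * Real.log (naiveHeight v (x n)) := by
      rw [← Real.log_pow, ← Real.log_mul (zero_lt_one.trans_le hC).ne' (pow_pos hH D).ne',
        horbit]
      exact Real.log_le_log (zero_lt_one.trans_le (one_le_naiveHeight _))
        (naiveHeight_eval_le _ q fun j => (hq j).trans (le_max_left d 1))
    nlinarith [abs_nonneg (Real.log ε)]
  obtain ⟨A, hA, hu⟩ := exists_le_mul_pow_of_le_add_mul hm
    (add_nonneg (Real.log_nonneg hC) (abs_nonneg _)) hD hrec
  have habs : ∀ n, |Real.log (v (x n i))| ≤ u n := by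
    intro n
    have hpos : 0 < v (x n i) := hε.trans (hbig n)
    have hlow : Real.log ε ≤ Real.log (v (x n i)) := Real.log_le_log hε (hbig n).le
    have hup : Real.log (v (x n i)) ≤ Real.log (naiveHeight v (x n)) :=
      Real.log_le_log hpos (apply_le_naiveHeight _ i)
    have hH : 0 ≤ Real.log (naiveHeight v (x n)) := Real.log_nonneg (one_le_naiveHeight _)
    rw [abs_le]
    constructor <;> linarith [neg_abs_le (Real.log ε), abs_nonneg (Real.log ε)]
  calc _ ≤ ((Real.log D / m : ℝ) : EReal) :=
        limsup_log_div_le_of_abs_le_mul_pow hA hD fun n => (habs n).trans (hu n)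
    _ = ((Real.log d / m : ℝ) : EReal) := by
        rcases Nat.eq_zero_or_pos d with rfl | hd
        · simp [D]
        · rw [show D = d from max_eq_left hd]

theorem exists_lift_totalDegree_le_relDeg {K A : Type*} [Field K] [CommRing A] [Algebra K A]
    {N : ℕ} {π : MvPolynomial (Fin N) K →ₐ[K] A} (hπ : Function.Surjective π)
    (φ : A →ₐ[K] A) :
    ∃ q : Fin N → MvPolynomial (Fin N) K,
      (∀ j, π (q j) = φ (π (X j))) ∧ ∀ j, (q j).totalDegree ≤ relDeg φ π := by
  choose p hp using fun j => hπ (φ (π (X j)))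
  exact Nat.sInf_mem (s := {d | ∃ q : Fin N → MvPolynomial (Fin N) K,
      (∀ j, π (q j) = φ (π (X j))) ∧ ∀ j, (q j).totalDegree ≤ d})
    ⟨_, p, hp, fun j => Finset.le_sup (f := fun j => (p j).totalDegree) (Finset.mem_univ j)⟩

theorem lower_bound_for_relative_entropy {K A : Type*} [Field K] [CommRing A] [Algebra K A]
    (v : AbsoluteValue K ℝ) {N : ℕ} (hN : 0 < N)
    (π : MvPolynomial (Fin N) K →ₐ[K] A) (hπ : Function.Surjective π)
    (φ : A →ₐ[K] A) (P₀ : A →ₐ[K] K)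
    (ε : ℝ) (hε : 0 < ε)
    (hbig : ∀ n : ℕ, ε < v (P₀ ((φ ^ n) (π (MvPolynomial.X ⟨0, hN⟩))))) :
    Filter.atTop.limsup (fun n : ℕ =>
        ((Real.log (Real.log (v (P₀ ((φ ^ n) (π (MvPolynomial.X ⟨0, hN⟩)))))) / n : ℝ) : EReal))
      ≤ Filter.atTop.limsup
          (fun n : ℕ => ((Real.log (relDeg (φ ^ n) π) / n : ℝ) : EReal)) := by
  set x : ℕ → Fin N → K := fun n j => P₀ ((φ ^ n) (π (X j)))
  have hx : ∀ n p, P₀ ((φ ^ n) (π p)) = eval (x n) p := fun n =>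
    DFunLike.congr_fun (aeval_unique (P₀.comp ((φ ^ n).comp π)))
  have hdeg : ∀ m : ℕ, 1 ≤ m →
      limsup (fun n : ℕ => ((Real.log (Real.log (v (x n ⟨0, hN⟩))) / n : ℝ) : EReal))
        atTop ≤ ((Real.log (relDeg (φ ^ m) π) / m : ℝ) : EReal) := by
    intro m hm
    obtain ⟨q, hq, hqd⟩ := exists_lift_totalDegree_le_relDeg hπ (φ ^ m)
    refine limsup_log_log_div_le_of_orbit v hm q hqd (fun n => funext fun j => ?_) hε _ hbig
    rw [← hx, hq, ← AlgHom.mul_apply, ← pow_add]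
  exact (le_liminf_of_le (by isBoundedDefault) (eventually_atTop.2 ⟨1, hdeg⟩)).trans
    liminf_le_limsup
end

section
/- Let ε > 0, C > 0 be real numbers, let d ≥ 2 be a natural number, and let b : ℕ → ℝ be a sequence with b(n) ≥ ε for all n and b(n+1) ≤ C·b(n)^d for all n. Then limsup_{n→∞} (1/n)·log(log b(n)) ≤ log d. -/
theorem limsup_loglog_le_log_deg (ε C : ℝ) (hε : 0 < ε) (hC : 0 < C)
    (d : ℕ) (hd : 2 ≤ d) (b : ℕ → ℝ) (hb : ∀ n, ε ≤ b n)
    (hrec : ∀ n, b (n + 1) ≤ C * b n ^ d) :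
    Filter.atTop.limsup (fun n : ℕ => ((Real.log (Real.log (b n)) / n : ℝ) : EReal))
      ≤ (Real.log d : EReal) := by
  have hbpos : ∀ n, 0 < b n := fun n => lt_of_lt_of_le hε (hb n)
  set k : ℝ := max (Real.log C / (d - 1)) 0 with hk
  have hd1 : (1 : ℝ) ≤ (d : ℝ) - 1 := by
    have : (2 : ℝ) ≤ (d : ℝ) := by exact_mod_cast hd
    linarith
  have hkL : Real.log C ≤ ((d : ℝ) - 1) * k := by
    rcases le_total (Real.log C) 0 with h | h
    · have : 0 ≤ ((d : ℝ) - 1) * k := mul_nonneg (by linarith) (le_max_right _ _)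
      linarith
    · have h1 : Real.log C / (d - 1) ≤ k := le_max_left _ _
      calc Real.log C = ((d : ℝ) - 1) * (Real.log C / (d - 1)) := by
            field_simp
        _ ≤ ((d : ℝ) - 1) * k := by
            exact mul_le_mul_of_nonneg_left h1 (by linarith)
  have hstep : ∀ n, Real.log (b (n + 1)) + k ≤ d * (Real.log (b n) + k) := by
    intro n
    have h1 : Real.log (b (n + 1)) ≤ Real.log (C * b n ^ d) :=
      Real.log_le_log (hbpos _) (hrec n)
    have h2 : Real.log (C * b n ^ d) = Real.log C + d * Real.log (b n) := by
      rw [Real.log_mul (ne_of_gt hC) (pow_pos (hbpos n) d).ne', Real.log_pow]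
    nlinarith [h1, h2]
  set A : ℝ := max (Real.log (b 0) + k) (|Real.log ε| + 1) with hA
  have hA1 : 1 ≤ A := le_trans (by nlinarith [abs_nonneg (Real.log ε)]) (le_max_right _ _)
  have hkey : ∀ n, Real.log (b n) + k ≤ (d : ℝ) ^ n * A := by
    intro n
    induction n with
    | zero => rw [pow_zero, one_mul]; exact le_max_left _ _
    | succ m ih =>
        calc Real.log (b (m + 1)) + k ≤ d * (Real.log (b m) + k) := hstep m
          _ ≤ d * ((d : ℝ) ^ m * A) := by
              apply mul_le_mul_of_nonneg_left ih (by positivity)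
          _ = (d : ℝ) ^ (m + 1) * A := by ring
  have habs : ∀ n, |Real.log (b n)| ≤ (d : ℝ) ^ n * A := by
    intro n
    have hpow : (1 : ℝ) ≤ (d : ℝ) ^ n := one_le_pow₀ (by exact_mod_cast le_trans (by norm_num) hd)
    rw [abs_le]
    constructor
    · have h1 : Real.log ε ≤ Real.log (b n) := Real.log_le_log hε (hb n)
      have h2 : -|Real.log ε| ≤ Real.log ε := neg_abs_le _
      have h3 : |Real.log ε| ≤ A := le_trans (by linarith [le_max_right (Real.log (b 0) + k) (|Real.log ε| + 1)]) (le_refl A)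
      nlinarith
    · have := hkey n
      have hk0 : 0 ≤ k := le_max_right _ _
      linarith
  -- log log bound
  have hlog : ∀ n, Real.log (Real.log (b n)) ≤ n * Real.log d + Real.log A := by
    intro n
    have hdA : 0 < (d : ℝ) ^ n * A := by positivity
    have h1 : Real.log (Real.log (b n)) = Real.log |Real.log (b n)| := (Real.log_abs _).symm
    rw [h1]
    rcases eq_or_lt_of_le (abs_nonneg (Real.log (b n))) with h | h
    · rw [← h, Real.log_zero]
      have : 0 ≤ Real.log ((d : ℝ) ^ n * A) := Real.log_nonneg (by
        have hpow : (1 : ℝ) ≤ (d : ℝ) ^ n := one_le_pow₀ (by exact_mod_cast le_trans (by norm_num) hd)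
        nlinarith)
      calc (0:ℝ) ≤ Real.log ((d : ℝ) ^ n * A) := this
        _ = n * Real.log d + Real.log A := by
            rw [Real.log_mul (by positivity) (by positivity), Real.log_pow]
    · calc Real.log |Real.log (b n)| ≤ Real.log ((d : ℝ) ^ n * A) :=
            Real.log_le_log h (habs n)
        _ = n * Real.log d + Real.log A := by
            rw [Real.log_mul (by positivity) (by positivity), Real.log_pow]
  -- compare with g
  have hle : ∀ᶠ n : ℕ in Filter.atTop,
      ((Real.log (Real.log (b n)) / n : ℝ) : EReal)
        ≤ ((Real.log d + Real.log A / n : ℝ) : EReal) := by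
    filter_upwards [Filter.eventually_ge_atTop 1] with n hn
    rw [EReal.coe_le_coe_iff]
    have hn0 : (0 : ℝ) < n := by exact_mod_cast hn
    rw [div_le_iff₀ hn0]
    have := hlog n
    calc Real.log (Real.log (b n)) ≤ n * Real.log d + Real.log A := this
      _ = (Real.log d + Real.log A / n) * n := by field_simp
  have hg : Filter.Tendsto (fun n : ℕ => ((Real.log d + Real.log A / n : ℝ) : EReal))
      Filter.atTop (nhds ((Real.log d : ℝ) : EReal)) := by
    have h1 : Filter.Tendsto (fun n : ℕ => Real.log d + Real.log A / n)
        Filter.atTop (nhds (Real.log d + 0)) :=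
      Filter.Tendsto.const_add _ (tendsto_const_div_atTop_nhds_zero_nat _)
    rw [add_zero] at h1
    exact (continuous_coe_real_ereal.tendsto _).comp h1
  calc Filter.atTop.limsup (fun n : ℕ => ((Real.log (Real.log (b n)) / n : ℝ) : EReal))
      ≤ Filter.atTop.limsup (fun n : ℕ => ((Real.log d + Real.log A / n : ℝ) : EReal)) :=
        Filter.limsup_le_limsup hle
    _ = (Real.log d : EReal) := hg.limsup_eq
end

section
/- Let K be a field and let F : K³ → K³ be the polynomial map F(x,y,z) = (x, z, x·z − y) (the action of the Dehn twist T_X on the SL₂ character variety of the once-punctured torus in trace coordinates). For every n ≥ 1, each component of the n-fold iterate F^{∘n} is given by a polynomial in x, y, z of total degree at most n+1. Consequently limsup_{n→∞} (1/n)·log(deg F^{∘n}) = 0, i.e. the algebraic entropy of F is 0. -/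
open MvPolynomial in
theorem dehn_twist_trace_coords_zero_entropy (K : Type*) [Field K]
    (P : Fin 3 → MvPolynomial (Fin 3) K)
    (hP : P = ![X 0, X 2, X 0 * X 2 - X 1])
    (iter : ℕ → Fin 3 → MvPolynomial (Fin 3) K)
    (hiter0 : iter 0 = X)
    (hiterS : ∀ n j, iter (n + 1) j = MvPolynomial.bind₁ (iter n) (P j)) :
    (∀ n, 1 ≤ n → ∀ j, (iter n j).totalDegree ≤ n + 1) ∧
      Filter.atTop.limsup (fun n : ℕ =>
        ((Real.log ((Finset.univ.sup fun j => (iter n j).totalDegree : ℕ) : ℝ) / n : ℝ) : EReal))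
        = (0 : EReal) := by
  -- Recursion unfolded
  have h0 : ∀ n, iter (n + 1) 0 = iter n 0 := by
    intro n; rw [hiterS, hP]; simp [bind₁_X_right]
  have h1 : ∀ n, iter (n + 1) 1 = iter n 2 := by
    intro n; rw [hiterS, hP]; simp [bind₁_X_right]
  have h2 : ∀ n, iter (n + 1) 2 = iter n 0 * iter n 2 - iter n 1 := by
    intro n; rw [hiterS, hP]
    simp [map_sub, map_mul, bind₁_X_right]
  have hx0 : ∀ n, iter n 0 = X 0 := by
    intro n; induction n with
    | zero => rw [hiter0]
    | succ n ih => rw [h0, ih]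
  -- degree bounds
  have key : ∀ n, 1 ≤ n → (iter n 0).totalDegree ≤ 1 ∧
      (iter n 1).totalDegree ≤ n ∧ (iter n 2).totalDegree ≤ n + 1 := by
    intro n hn
    induction n, hn using Nat.le_induction with
    | base =>
      have e1 : iter 1 1 = X 2 := by rw [h1, hiter0]
      have e2 : iter 1 2 = X 0 * X 2 - X 1 := by rw [h2, hiter0]
      refine ⟨by rw [hx0, totalDegree_X], by rw [e1, totalDegree_X], ?_⟩
      rw [e2]
      refine (totalDegree_sub _ _).trans (max_le ?_ (by simp [totalDegree_X]))
      exact (totalDegree_mul _ _).trans (by simp [totalDegree_X])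
    | succ n hn ih =>
      obtain ⟨i0, i1, i2⟩ := ih
      refine ⟨by rw [h0]; exact i0, by rw [h1]; omega, ?_⟩
      rw [h2]
      refine (totalDegree_sub _ _).trans (max_le ?_ (by omega))
      exact (totalDegree_mul _ _).trans (by omega)
  have deg_le : ∀ n, 1 ≤ n → ∀ j, (iter n j).totalDegree ≤ n + 1 := by
    intro n hn j
    obtain ⟨i0, i1, i2⟩ := key n hn
    fin_cases j
    · exact le_trans i0 (by omega)
    · exact le_trans i1 (by omega)
    · exact i2
  refine ⟨deg_le, ?_⟩
  -- the supremum of the degrees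
  set D : ℕ → ℕ := fun n => Finset.univ.sup fun j => (iter n j).totalDegree with hD
  have hD1 : ∀ n, 1 ≤ D n := by
    intro n
    have : (iter n 0).totalDegree ≤ D n := by
      simp only [hD]
      exact Finset.le_sup (f := fun j : Fin 3 => (iter n j).totalDegree) (Finset.mem_univ 0)
    rw [hx0, totalDegree_X] at this; exact this
  have hDle : ∀ n, 1 ≤ n → D n ≤ n + 1 := by
    intro n hn
    simp only [hD]
    exact Finset.sup_le fun j _ => deg_le n hn j
  -- real convergence
  have tlog : Filter.Tendsto (fun x : ℝ => Real.log x / x) Filter.atTop (nhds 0) :=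
    Real.isLittleO_log_id_atTop.tendsto_div_nhds_zero
  have tnat : Filter.Tendsto (fun n : ℕ => ((n : ℝ) + 1)) Filter.atTop Filter.atTop :=
    Filter.tendsto_atTop_add_const_right _ 1 tendsto_natCast_atTop_atTop
  have tg : Filter.Tendsto (fun n : ℕ => 2 * (Real.log ((n : ℝ) + 1) / ((n : ℝ) + 1)))
      Filter.atTop (nhds 0) := by
    have := (tlog.comp tnat).const_mul (2 : ℝ)
    simpa using this
  have treal : Filter.Tendsto (fun n : ℕ => Real.log (D n) / n) Filter.atTop (nhds 0) := by
    apply squeeze_zero' (g := fun n : ℕ => 2 * (Real.log ((n : ℝ) + 1) / ((n : ℝ) + 1)))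
    · filter_upwards [Filter.eventually_ge_atTop 1] with n hn
      apply div_nonneg _ (by positivity)
      apply Real.log_nonneg
      exact_mod_cast hD1 n
    · filter_upwards [Filter.eventually_ge_atTop 1] with n hn
      have hn1 : (1 : ℝ) ≤ (n : ℝ) := by exact_mod_cast hn
      have hlog_le : Real.log (D n) ≤ Real.log ((n : ℝ) + 1) := by
        apply Real.log_le_log (by exact_mod_cast hD1 n)
        have := hDle n hn
        exact_mod_cast this
      have hlog_nonneg : 0 ≤ Real.log ((n : ℝ) + 1) :=
        Real.log_nonneg (by linarith)
      have hlogD : 0 ≤ Real.log (D n) := Real.log_nonneg (by exact_mod_cast hD1 n)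
      rw [div_le_iff₀ (by linarith : (0:ℝ) < (n:ℝ))]
      have hc : Real.log ((n:ℝ)+1) / ((n:ℝ)+1) * ((n:ℝ)+1) = Real.log ((n:ℝ)+1) :=
        div_mul_cancel₀ _ (by linarith)
      have hq : 0 ≤ Real.log ((n:ℝ)+1) / ((n:ℝ)+1) :=
        div_nonneg hlog_nonneg (by linarith)
      nlinarith [mul_nonneg hq (show (0:ℝ) ≤ (n:ℝ) - 1 by linarith)]
    · exact tg
  have tE : Filter.Tendsto (fun n : ℕ =>
      ((Real.log (D n) / n : ℝ) : EReal)) Filter.atTop (nhds ((0:ℝ) : EReal)) :=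
    (continuous_coe_real_ereal.continuousAt).tendsto.comp treal
  have := tE.limsup_eq
  simpa using this
end
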